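/- Let K₁, …, Kₙ ⊆ X be non-empty closed convex sets in a finite-dimensional real vector space X, let γ₁, …, γₙ be gauges on X, and let F be the set of minimizers of f : X → ℝ, f(x) = Σᵢ₌₁ⁿ dist_{γᵢ}(x, Kᵢ). Then: (a) F is closed and convex; (b) if at least one of the sets Kᵢ is bounded, then F is non-empty and bounded; (c) if all the sets Kᵢ are affine flats (affine subspaces of X), then F is non-empty and F = C + V is the Minkowski sum of a non-empty closed, bounded, convex set C and a linear subspace V of X (possibly V = {0}). -/

import Mathlib

/-!
Each `dist_γ(·, K)` is convex, being the infimum over `y ∈ K` of the jointly convex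
`(x, y) ↦ γ (y - x)`, hence continuous; so the minimizers of `f` form a closed convex set.
A gauge dominates `m ‖·‖` for some `m > 0`, so if `Kⱼ` is bounded then `f x ≥ m ‖x‖ - C` and the
minimizers exist and are bounded. If every `Kᵢ` is a flat with direction `Vᵢ`, then `f` is invariant
under translations by `V = ⋂ Vᵢ`, while on a complement `W` of `V` it still grows linearly, because
`∑ ‖x mod Vᵢ‖` vanishes on `W` only at `0`. Hence `F = (F ∩ W) + V` with `F ∩ W` non-empty, closed,
bounded and convex.
-/

open scoped Pointwise

/-- A gauge on a real vector space: nonnegative, definite at `0`, positively homogeneous,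
and subadditive. -/
def IsGauge {X : Type*} [AddCommGroup X] [Module ℝ X] (γ : X → ℝ) : Prop :=
  (∀ x, 0 ≤ γ x) ∧ (∀ x : X, γ x = 0 → x = 0) ∧
    (∀ (l : ℝ) (x : X), 0 ≤ l → γ (l • x) = l * γ x) ∧
    ∀ x y, γ (x + y) ≤ γ x + γ y

/-- The distance from `x` to the set `K` with respect to the gauge `γ`:
`dist_γ(x, K) = inf {γ (y - x) : y ∈ K}`. -/
noncomputable def gaugeDist {X : Type*} [AddCommGroup X] [Module ℝ X]
    (γ : X → ℝ) (x : X) (K : Set X) : ℝ :=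
  sInf ((fun y => γ (y - x)) '' K)

open Set Filter Metric Bornology

namespace IsGauge

variable {X : Type*} [AddCommGroup X] [Module ℝ X] {γ : X → ℝ}

lemma nonneg (hγ : IsGauge γ) (x : X) : 0 ≤ γ x := hγ.1 x

lemma pos (hγ : IsGauge γ) {x : X} (hx : x ≠ 0) : 0 < γ x :=
  (hγ.nonneg x).lt_of_ne fun h => hx (hγ.2.1 x h.symm)

lemma map_smul_of_nonneg (hγ : IsGauge γ) {t : ℝ} (ht : 0 ≤ t) (x : X) : γ (t • x) = t * γ x :=
  hγ.2.2.1 t x ht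

lemma add_le (hγ : IsGauge γ) (x y : X) : γ (x + y) ≤ γ x + γ y := hγ.2.2.2 x y

lemma convexOn (hγ : IsGauge γ) : ConvexOn ℝ univ γ :=
  ⟨convex_univ, fun x _ y _ a b ha hb _ => by
    simpa only [hγ.map_smul_of_nonneg ha, hγ.map_smul_of_nonneg hb, smul_eq_mul]
      using hγ.add_le (a • x) (b • y)⟩

end IsGauge

section FiniteDimensional

variable {E : Type*} [NormedAddCommGroup E] [NormedSpace ℝ E] [FiniteDimensional ℝ E]

lemma exists_pos_mul_norm_le_of_map_smul {g : E → ℝ} (hg : Continuous g)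
    (hsmul : ∀ t : ℝ, 0 ≤ t → ∀ x, g (t • x) = t * g x) (W : Submodule ℝ E)
    (hpos : ∀ x ∈ W, x ≠ 0 → 0 < g x) : ∃ m > 0, ∀ x ∈ W, m * ‖x‖ ≤ g x := by
  obtain ⟨m, hm, hmg⟩ := ((isCompact_sphere (0 : E) 1).inter_right
    W.closed_of_finiteDimensional).exists_forall_le' hg.continuousOn
    fun x hx => hpos x hx.2 (ne_zero_of_mem_unit_sphere ⟨x, hx.1⟩)
  refine ⟨m, hm, fun x hx => ?_⟩
  rcases eq_or_ne x 0 with rfl | hx0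
  · simp [show g 0 = 0 by simpa using hsmul 0 le_rfl 0]
  have hnx : 0 < ‖x‖ := norm_pos_iff.2 hx0
  have hu : ‖x‖⁻¹ • x ∈ sphere (0 : E) 1 ∩ W :=
    ⟨by simp [norm_smul, hnx.ne'], W.smul_mem _ hx⟩
  calc m * ‖x‖ ≤ g (‖x‖⁻¹ • x) * ‖x‖ := mul_le_mul_of_nonneg_right (hmg _ hu) hnx.le
    _ = g x := by rw [hsmul _ (inv_nonneg.2 hnx.le)]; field_simp

lemma IsGauge.continuous {γ : E → ℝ} (hγ : IsGauge γ) : Continuous γ :=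
  continuousOn_univ.1 (hγ.convexOn.continuousOn isOpen_univ)

lemma IsGauge.exists_pos_mul_norm_le {γ : E → ℝ} (hγ : IsGauge γ) :
    ∃ m > 0, ∀ x, m * ‖x‖ ≤ γ x := by
  obtain ⟨m, hm, hmγ⟩ := exists_pos_mul_norm_le_of_map_smul hγ.continuous
    (fun _ ht => hγ.map_smul_of_nonneg ht) ⊤ fun _ _ => hγ.pos
  exact ⟨m, hm, fun x => hmγ x trivial⟩

end FiniteDimensional

section GaugeDist

variable {X : Type*} [AddCommGroup X] [Module ℝ X] {γ : X → ℝ} {K : Set X} {x : X}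

lemma gaugeDist_le_of_mem (hγ : IsGauge γ) {y : X} (hy : y ∈ K) : gaugeDist γ x K ≤ γ (y - x) :=
  csInf_le ⟨0, forall_mem_image.2 fun _ _ => hγ.nonneg _⟩ (mem_image_of_mem _ hy)

lemma le_gaugeDist (hK : K.Nonempty) {b : ℝ} (h : ∀ y ∈ K, b ≤ γ (y - x)) :
    b ≤ gaugeDist γ x K :=
  le_csInf (hK.image _) (forall_mem_image.2 h)

lemma gaugeDist_nonneg (hγ : IsGauge γ) (hK : K.Nonempty) : 0 ≤ gaugeDist γ x K :=
  le_gaugeDist hK fun _ _ => hγ.nonneg _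

lemma convexOn_gaugeDist (hγ : IsGauge γ) (hK : K.Nonempty) (hKc : Convex ℝ K) :
    ConvexOn ℝ univ (gaugeDist γ · K) := by
  refine ⟨convex_univ, fun x _ y _ a b ha hb hab => le_of_forall_pos_le_add fun ε hε => ?_⟩
  obtain ⟨_, ⟨p, hp, rfl⟩, hpx⟩ := Real.lt_sInf_add_pos (hK.image fun p => γ (p - x)) hε
  obtain ⟨_, ⟨q, hq, rfl⟩, hqy⟩ := Real.lt_sInf_add_pos (hK.image fun q => γ (q - y)) hε
  have hpq : a • p + b • q - (a • x + b • y) = a • (p - x) + b • (q - y) := by module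
  calc gaugeDist γ (a • x + b • y) K ≤ γ (a • (p - x) + b • (q - y)) :=
        hpq ▸ gaugeDist_le_of_mem hγ (hKc hp hq ha hb hab)
    _ ≤ a * γ (p - x) + b * γ (q - y) :=
        hγ.convexOn.2 (mem_univ _) (mem_univ _) ha hb hab
    _ ≤ a * (gaugeDist γ x K + ε) + b * (gaugeDist γ y K + ε) := by
        gcongr
        exacts [hpx.le, hqy.le]
    _ = a • gaugeDist γ x K + b • gaugeDist γ y K + ε := by
        rw [smul_eq_mul, smul_eq_mul]; linear_combination ε * hab

lemma gaugeDist_add_of_mem_direction {S : AffineSubspace ℝ X} {v : X} (hv : v ∈ S.direction)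
    (x : X) : gaugeDist γ (x + v) S = gaugeDist γ x S := by
  have hS : (· + v) '' (S : Set X) = S := by
    ext y
    rw [image_add_right, mem_preimage, SetLike.mem_coe, SetLike.mem_coe, add_comm, ← vadd_eq_add,
      AffineSubspace.vadd_mem_iff_mem_of_mem_direction (S.direction.neg_mem hv)]
  rw [gaugeDist, gaugeDist]
  conv_lhs => rw [← hS, image_image]
  simp only [add_sub_add_right_eq_sub]

end GaugeDist

section Minimizers

lemma isClosed_setOf_forall_le {α : Type*} [TopologicalSpace α] {f : α → ℝ}
    (hf : LowerSemicontinuous f) : IsClosed {x | ∀ y, f x ≤ f y} := by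
  rw [ofPred_forall]
  exact isClosed_iInter fun y => hf.isClosed_preimage (f y)

lemma ConvexOn.convex_setOf_forall_le {E : Type*} [AddCommMonoid E] [Module ℝ E] {f : E → ℝ}
    (hf : ConvexOn ℝ univ f) : Convex ℝ {x | ∀ y, f x ≤ f y} := by
  rw [ofPred_forall]
  exact convex_iInter fun y => by simpa using hf.convex_le (f y)

lemma ConvexOn.fun_sum {E ι : Type*} [AddCommMonoid E] [Module ℝ E] {s : Set E}
    (hs : Convex ℝ s) {t : Finset ι} {f : ι → E → ℝ} (hf : ∀ i ∈ t, ConvexOn ℝ s (f i)) :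
    ConvexOn ℝ s fun x => ∑ i ∈ t, f i x := by
  convert Finset.sum_induction f (ConvexOn ℝ s) (fun _ _ => ConvexOn.add) (convexOn_const 0 hs) hf
    using 1
  exact funext fun x => (Finset.sum_apply x t f).symm

variable {E : Type*} [AddCommGroup E] [Module ℝ E] {f : E → ℝ} {V W : Submodule ℝ E}

lemma forall_le_of_isMinOn_of_isCompl (hVW : IsCompl V W) (hf : ∀ x, ∀ v ∈ V, f (x + v) = f x)
    {x₀ : E} (hx₀ : IsMinOn f W x₀) (y : E) : f x₀ ≤ f y := by
  obtain ⟨v, w, hv, hw, rfl⟩ := Submodule.codisjoint_iff_exists_add_eq.1 hVW.codisjoint y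
  rw [add_comm, hf w v hv]
  exact hx₀ hw

lemma setOf_forall_le_eq_inter_add (hVW : IsCompl V W) (hf : ∀ x, ∀ v ∈ V, f (x + v) = f x) :
    {x | ∀ y, f x ≤ f y} = ({x | ∀ y, f x ≤ f y} ∩ W) + V := by
  ext x
  constructor
  · intro hx
    obtain ⟨v, w, hv, hw, rfl⟩ := Submodule.codisjoint_iff_exists_add_eq.1 hVW.codisjoint x
    rw [add_comm v w] at hx ⊢
    exact ⟨w, ⟨fun y => hf w v hv ▸ hx y, hw⟩, v, hv, rfl⟩
  · rintro ⟨w, ⟨hw, -⟩, v, hv, rfl⟩ y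
    exact (hf w v hv).symm ▸ hw y

end Minimizers

section Coercive

variable {E : Type*} [NormedAddCommGroup E] {f : E → ℝ} {s : Set E} {c C : ℝ}

lemma exists_isMinOn_of_mul_norm_sub_le [ProperSpace E] (hf : ContinuousOn f s)
    (hs : IsClosed s) (hne : s.Nonempty) (hc : 0 < c) (hfs : ∀ x ∈ s, c * ‖x‖ - C ≤ f x) :
    ∃ x ∈ s, IsMinOn f s x := by
  obtain ⟨x₀, hx₀⟩ := hne
  have hlin : Tendsto (fun x : E => c * ‖x‖ - C) (cocompact E) atTop :=
    tendsto_atTop_add_const_right _ _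
      ((tendsto_const_mul_atTop_of_pos hc).2 tendsto_norm_cocompact_atTop)
  refine hf.exists_isMinOn' hs hx₀ ?_
  filter_upwards [(hlin.eventually_ge_atTop (f x₀)).filter_mono inf_le_left,
    mem_inf_of_right (mem_principal_self s)] with x hx hxs using hx.trans (hfs x hxs)

lemma isBounded_setOf_le_of_mul_norm_sub_le (hc : 0 < c) (hfs : ∀ x ∈ s, c * ‖x‖ - C ≤ f x)
    (r : ℝ) : IsBounded {x ∈ s | f x ≤ r} := by
  refine (isBounded_closedBall (x := 0) (r := (r + C) / c)).subset fun x hx => ?_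
  rw [mem_closedBall_zero_iff, le_div_iff₀ hc]
  linarith [hfs x hx.1, hx.2]

lemma setOf_forall_le_inter_nonempty_and_isBounded [NormedSpace ℝ E] [FiniteDimensional ℝ E]
    (hf : Continuous f) {V W : Submodule ℝ E} (hVW : IsCompl V W)
    (hinv : ∀ x, ∀ v ∈ V, f (x + v) = f x) (hc : 0 < c) (hfW : ∀ x ∈ W, c * ‖x‖ - C ≤ f x) :
    ({x | ∀ y, f x ≤ f y} ∩ W).Nonempty ∧ IsBounded ({x | ∀ y, f x ≤ f y} ∩ W) := by
  obtain ⟨x₀, hx₀W, hx₀⟩ := exists_isMinOn_of_mul_norm_sub_le hf.continuousOn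
    W.closed_of_finiteDimensional ⟨0, W.zero_mem⟩ hc hfW
  have hmin := forall_le_of_isMinOn_of_isCompl hVW hinv hx₀
  exact ⟨⟨x₀, hmin, hx₀W⟩, (isBounded_setOf_le_of_mul_norm_sub_le hc hfW (f x₀)).subset
    fun x hx => ⟨hx.2, hx.1 x₀⟩⟩

end Coercive

section LowerBounds

variable {X : Type*} [NormedAddCommGroup X] [NormedSpace ℝ X] {γ : X → ℝ} {m : ℝ}

lemma continuous_gaugeDist [FiniteDimensional ℝ X] (hγ : IsGauge γ) {K : Set X}
    (hK : K.Nonempty) (hKc : Convex ℝ K) : Continuous (gaugeDist γ · K) :=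
  continuousOn_univ.1 ((convexOn_gaugeDist hγ hK hKc).continuousOn isOpen_univ)

lemma mul_norm_sub_le_gaugeDist (hm : 0 ≤ m) (hmγ : ∀ u, m * ‖u‖ ≤ γ u) {K : Set X}
    (hK : K.Nonempty) {R : ℝ} (hR : ∀ y ∈ K, ‖y‖ ≤ R) (x : X) :
    m * ‖x‖ - m * R ≤ gaugeDist γ x K := by
  refine le_gaugeDist hK fun y hy => ?_
  have hxy : ‖x‖ - R ≤ ‖y - x‖ := by
    linarith [norm_sub_norm_le x y, norm_sub_rev x y, hR y hy]
  calc m * ‖x‖ - m * R = m * (‖x‖ - R) := by ring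
    _ ≤ m * ‖y - x‖ := mul_le_mul_of_nonneg_left hxy hm
    _ ≤ γ (y - x) := hmγ _

lemma mul_norm_mkQ_sub_le_gaugeDist (hm : 0 ≤ m) (hmγ : ∀ u, m * ‖u‖ ≤ γ u)
    {S : AffineSubspace ℝ X} {a : X} (ha : a ∈ S) (x : X) :
    m * (‖S.direction.mkQ x‖ - ‖a‖) ≤ gaugeDist γ x S := by
  refine le_gaugeDist ⟨a, ha⟩ fun y hy => (mul_le_mul_of_nonneg_left ?_ hm).trans (hmγ _)
  have hmk : S.direction.mkQ x = S.direction.mkQ (x - y + a) := by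
    refine (Submodule.Quotient.eq _).2 ?_
    rw [show x - (x - y + a) = y - a by abel]
    exact AffineSubspace.vsub_mem_direction hy ha
  calc ‖S.direction.mkQ x‖ - ‖a‖ ≤ ‖x - y + a‖ - ‖a‖ := by
        rw [hmk]
        exact sub_le_sub_right (Submodule.Quotient.norm_mk_le _ _) _
    _ ≤ ‖y - x‖ := by linarith [norm_add_le (x - y) a, norm_sub_rev x y]

lemma exists_pos_mul_norm_le_sum_norm_mkQ [FiniteDimensional ℝ X] {ι : Type*} [Fintype ι]
    (V : ι → Submodule ℝ X) {w : ι → ℝ} (hw : ∀ i, 0 < w i) {W : Submodule ℝ X}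
    (hW : Disjoint (⨅ i, V i) W) : ∃ c > 0, ∀ x ∈ W, c * ‖x‖ ≤ ∑ i, w i * ‖(V i).mkQ x‖ := by
  refine exists_pos_mul_norm_le_of_map_smul (g := fun x => ∑ i, w i * ‖(V i).mkQ x‖)
    (continuous_finsetSum _ fun i _ => continuous_const.mul (V i).continuous_mkQ.norm)
    (fun t ht x => ?_) W fun x hxW hx0 => ?_
  · simp only [map_smul, norm_smul, Real.norm_of_nonneg ht, Finset.mul_sum]
    exact Finset.sum_congr rfl fun i _ => by ring
  · obtain ⟨i, hi⟩ : ∃ i, x ∉ V i := by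
      by_contra! h
      exact hx0 (hW.le_bot ⟨Submodule.mem_iInf _ |>.2 h, hxW⟩)
    refine Finset.sum_pos' (fun i _ => mul_nonneg (hw i).le (norm_nonneg _))
      ⟨i, Finset.mem_univ i, ?_⟩
    refine mul_pos (hw i) ((norm_nonneg _).lt_of_ne' fun h => hi ?_)
    exact (V i).closed_of_finiteDimensional.closure_subset
      ((QuotientAddGroup.norm_mk_eq_zero_iff_mem_closure (S := (V i).toAddSubgroup)).1 h)

lemma exists_mul_norm_sub_le_sum_gaugeDist [FiniteDimensional ℝ X] {ι : Type*} [Fintype ι]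
    {γ : ι → X → ℝ} (hγ : ∀ i, IsGauge (γ i)) (S : ι → AffineSubspace ℝ X)
    (hS : ∀ i, (S i : Set X).Nonempty) {W : Submodule ℝ X}
    (hW : Disjoint (⨅ i, (S i).direction) W) :
    ∃ c > 0, ∃ C, ∀ x ∈ W, c * ‖x‖ - C ≤ ∑ i, gaugeDist (γ i) x (S i) := by
  choose m hm hmγ using fun i => (hγ i).exists_pos_mul_norm_le
  choose a ha using hS
  obtain ⟨c, hc, hcW⟩ := exists_pos_mul_norm_le_sum_norm_mkQ (fun i => (S i).direction) hm hW
  refine ⟨c, hc, ∑ i, m i * ‖a i‖, fun x hx => ?_⟩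
  calc c * ‖x‖ - ∑ i, m i * ‖a i‖ ≤ ∑ i, m i * (‖(S i).direction.mkQ x‖ - ‖a i‖) := by
        simp only [mul_sub, Finset.sum_sub_distrib]
        linarith [hcW x hx]
    _ ≤ ∑ i, gaugeDist (γ i) x (S i) :=
        Finset.sum_le_sum fun i _ => mul_norm_mkQ_sub_le_gaugeDist (hm i).le (hmγ i) (ha i) x

end LowerBounds

theorem fermatTorricelli_locus_of_sets_closed_convex_bounded_flats_general
    {X : Type*} [NormedAddCommGroup X] [NormedSpace ℝ X] [FiniteDimensional ℝ X]
    {n : ℕ} (K : Fin n → Set X) (hne : ∀ i, (K i).Nonempty)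
    (hcv : ∀ i, Convex ℝ (K i))
    (γ : Fin n → X → ℝ) (hγ : ∀ i, IsGauge (γ i)) :
    (IsClosed {x : X | ∀ y : X, ∑ i, gaugeDist (γ i) x (K i) ≤ ∑ i, gaugeDist (γ i) y (K i)} ∧
      Convex ℝ {x : X | ∀ y : X, ∑ i, gaugeDist (γ i) x (K i) ≤ ∑ i, gaugeDist (γ i) y (K i)}) ∧
    ((∃ i, Bornology.IsBounded (K i)) →
      ({x : X | ∀ y : X, ∑ i, gaugeDist (γ i) x (K i) ≤
          ∑ i, gaugeDist (γ i) y (K i)}).Nonempty ∧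
      Bornology.IsBounded
        {x : X | ∀ y : X, ∑ i, gaugeDist (γ i) x (K i) ≤ ∑ i, gaugeDist (γ i) y (K i)}) ∧
    ((∀ i, ∃ S : AffineSubspace ℝ X, K i = (S : Set X)) →
      ({x : X | ∀ y : X, ∑ i, gaugeDist (γ i) x (K i) ≤
          ∑ i, gaugeDist (γ i) y (K i)}).Nonempty ∧
      ∃ (C : Set X) (V : Submodule ℝ X), C.Nonempty ∧ IsClosed C ∧
        Bornology.IsBounded C ∧ Convex ℝ C ∧
        {x : X | ∀ y : X, ∑ i, gaugeDist (γ i) x (K i) ≤ ∑ i, gaugeDist (γ i) y (K i)} =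
          C + (V : Set X)) := by
  set f : X → ℝ := fun x => ∑ i, gaugeDist (γ i) x (K i)
  have hf_convex : ConvexOn ℝ univ f :=
    ConvexOn.fun_sum convex_univ fun i _ => convexOn_gaugeDist (hγ i) (hne i) (hcv i)
  have hf_cont : Continuous f :=
    continuous_finsetSum _ fun i _ => continuous_gaugeDist (hγ i) (hne i) (hcv i)
  have hF_closed := isClosed_setOf_forall_le hf_cont.lowerSemicontinuous
  have hF_convex := hf_convex.convex_setOf_forall_le
  refine ⟨⟨hF_closed, hF_convex⟩, fun ⟨j, hj⟩ => ?_, fun hflat => ?_⟩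
  · obtain ⟨m, hm, hmγ⟩ := (hγ j).exists_pos_mul_norm_le
    obtain ⟨R, hR⟩ := isBounded_iff_forall_norm_le.1 hj
    have hf_ge : ∀ x ∈ (⊤ : Submodule ℝ X), m * ‖x‖ - m * R ≤ f x := fun x _ =>
      (mul_norm_sub_le_gaugeDist hm.le hmγ (hne j) hR x).trans
        (Finset.single_le_sum (fun i _ => gaugeDist_nonneg (hγ i) (hne i)) (Finset.mem_univ j))
    simpa using
      setOf_forall_le_inter_nonempty_and_isBounded hf_cont isCompl_bot_top (by simp) hm hf_ge
  · choose S hS using hflat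
    obtain rfl : K = fun i => (S i : Set X) := funext hS
    obtain ⟨W, hVW⟩ := (⨅ i, (S i).direction).exists_isCompl
    have hf_inv : ∀ x, ∀ v ∈ ⨅ i, (S i).direction, f (x + v) = f x := fun x v hv =>
      Finset.sum_congr rfl fun i _ =>
        gaugeDist_add_of_mem_direction ((Submodule.mem_iInf _).1 hv i) x
    obtain ⟨c, hc, C, hf_ge⟩ := exists_mul_norm_sub_le_sum_gaugeDist hγ S hne hVW.disjoint
    obtain ⟨hCne, hCb⟩ :=
      setOf_forall_le_inter_nonempty_and_isBounded hf_cont hVW hf_inv hc hf_ge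
    exact ⟨hCne.mono inter_subset_left, _, _, hCne,
      hF_closed.inter W.closed_of_finiteDimensional, hCb, hF_convex.inter W.convex,
      setOf_forall_le_eq_inter_add hVW hf_inv⟩

/-- Properties of the set `F` of minimizers of `x ↦ ∑ dist_{γᵢ}(x, Kᵢ)` for non-empty closed
convex sets `Kᵢ`: (a) `F` is closed and convex; (b) if some `Kᵢ` is bounded then `F` is
non-empty and bounded; (c) if all `Kᵢ` are affine flats, then `F` is non-empty and is the
Minkowski sum of a non-empty closed bounded convex set and a linear subspace. -/
theorem fermatTorricelli_locus_of_sets_closed_convex_bounded_flats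
    {X : Type*} [NormedAddCommGroup X] [NormedSpace ℝ X] [FiniteDimensional ℝ X]
    {n : ℕ} (K : Fin n → Set X) (hne : ∀ i, (K i).Nonempty)
    (hcl : ∀ i, IsClosed (K i)) (hcv : ∀ i, Convex ℝ (K i))
    (γ : Fin n → X → ℝ) (hγ : ∀ i, IsGauge (γ i)) :
    (IsClosed {x : X | ∀ y : X, ∑ i, gaugeDist (γ i) x (K i) ≤ ∑ i, gaugeDist (γ i) y (K i)} ∧
      Convex ℝ {x : X | ∀ y : X, ∑ i, gaugeDist (γ i) x (K i) ≤ ∑ i, gaugeDist (γ i) y (K i)}) ∧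
    ((∃ i, Bornology.IsBounded (K i)) →
      ({x : X | ∀ y : X, ∑ i, gaugeDist (γ i) x (K i) ≤
          ∑ i, gaugeDist (γ i) y (K i)}).Nonempty ∧
      Bornology.IsBounded
        {x : X | ∀ y : X, ∑ i, gaugeDist (γ i) x (K i) ≤ ∑ i, gaugeDist (γ i) y (K i)}) ∧
    ((∀ i, ∃ S : AffineSubspace ℝ X, K i = (S : Set X)) →
      ({x : X | ∀ y : X, ∑ i, gaugeDist (γ i) x (K i) ≤
          ∑ i, gaugeDist (γ i) y (K i)}).Nonempty ∧
      ∃ (C : Set X) (V : Submodule ℝ X), C.Nonempty ∧ IsClosed C ∧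
        Bornology.IsBounded C ∧ Convex ℝ C ∧
        {x : X | ∀ y : X, ∑ i, gaugeDist (γ i) x (K i) ≤ ∑ i, gaugeDist (γ i) y (K i)} =
          C + (V : Set X)) :=
  fermatTorricelli_locus_of_sets_closed_convex_bounded_flats_general K hne hcv γ hγ
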